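/- arXiv:math/0611040 — 2 statements merged into one kernel-verified Lean document; each statement's English description precedes it below -/
import Mathlib

section
/- For every λ ≥ 0, e^{-λ} = (1/√π) ∫₀^∞ (e^{-u}/√u) e^{-λ²/(4u)} du. -/
/-!
Substituting `u = v²` turns the integral into `2 ∫₀^∞ exp (-(v² + λ²/(4v²))) dv`, and completing
the square, `v² + λ²/(4v²) = (v - a/v)² + λ` with `a = λ/2`, reduces the claim to
`∫₀^∞ exp (-(v - a/v)²) dv = √π / 2` for `a ≥ 0`. This is the Cauchy–Schlömilch
transformation: for `a > 0` the substitution `v ↦ a/v` shows that inserting the weight `a/v²`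
does not change the integral of an even function of `v - a/v`, while `v ↦ v - a/v` maps `(0, ∞)`
onto `ℝ` with Jacobian `1 + a/v²`, so twice the integral is the full Gaussian integral `√π`.
-/

open Real MeasureTheory Set

section

variable {E : Type*} [NormedAddCommGroup E] [NormedSpace ℝ E] {a : ℝ}

theorem integral_Ioi_comp_sq (f : ℝ → E) :
    ∫ v in Ioi (0 : ℝ), (2 * v) • f (v ^ 2) = ∫ u in Ioi (0 : ℝ), f u := by
  have h := integral_comp_rpow_Ioi_of_pos (g := f) (p := 2) two_pos
  norm_num [Real.rpow_two] at h
  exact h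

theorem image_const_div_Ioi (ha : 0 < a) : (fun v : ℝ => a / v) '' Ioi 0 = Ioi 0 := by
  refine Subset.antisymm (image_subset_iff.2 fun v hv => div_pos ha hv) fun w hw => ?_
  exact ⟨a / w, div_pos ha hw, div_div_cancel₀ ha.ne'⟩

theorem injOn_const_div_Ioi (ha : 0 < a) : InjOn (fun v : ℝ => a / v) (Ioi 0) :=
  fun v _ w _ h => by simpa [div_div_cancel₀ ha.ne'] using congrArg (a / ·) h

theorem hasDerivAt_const_div (a : ℝ) {v : ℝ} (hv : v ≠ 0) :
    HasDerivAt (fun v : ℝ => a / v) (-(a / v ^ 2)) v := by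
  simpa [div_eq_mul_inv, neg_div] using (hasDerivAt_inv hv).const_mul a

theorem image_sub_const_div_Ioi (ha : 0 < a) : (fun v : ℝ => v - a / v) '' Ioi 0 = univ := by
  refine eq_univ_of_forall fun t => ?_
  set s := √(t ^ 2 + 4 * a)
  have hs : s ^ 2 = t ^ 2 + 4 * a := sq_sqrt (by positivity)
  have hts : 0 < t + s := by
    nlinarith [sqrt_nonneg (t ^ 2 + 4 * a), sq_nonneg (s + t), sq_nonneg (s - t)]
  refine ⟨(t + s) / 2, half_pos hts, ?_⟩
  field_simp
  linear_combination hs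

theorem strictMonoOn_sub_const_div_Ioi (ha : 0 < a) :
    StrictMonoOn (fun v : ℝ => v - a / v) (Ioi 0) := by
  intro v hv w _ hvw
  have : a / w < a / v := div_lt_div_of_pos_left ha hv hvw
  simp only
  linarith

theorem hasDerivAt_sub_const_div (a : ℝ) {v : ℝ} (hv : v ≠ 0) :
    HasDerivAt (fun v : ℝ => v - a / v) (1 + a / v ^ 2) v :=
  ((hasDerivAt_id' v).sub (hasDerivAt_const_div a hv)).congr_deriv (by ring)

theorem integral_Ioi_comp_const_div (ha : 0 < a) (g : ℝ → E) :
    ∫ v in Ioi 0, (a / v ^ 2) • g (a / v) = ∫ w in Ioi 0, g w := by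
  have h := integral_image_eq_integral_abs_deriv_smul measurableSet_Ioi
    (fun v hv => (hasDerivAt_const_div a (ne_of_gt hv)).hasDerivWithinAt)
    (injOn_const_div_Ioi ha) g
  rw [image_const_div_Ioi ha] at h
  rw [h]
  refine setIntegral_congr_fun measurableSet_Ioi fun v (hv : 0 < v) => ?_
  rw [abs_neg, abs_of_pos (by positivity)]

theorem integral_Ioi_comp_sub_const_div (ha : 0 < a) (g : ℝ → E) :
    ∫ v in Ioi 0, (1 + a / v ^ 2) • g (v - a / v) = ∫ t, g t := by
  have h := integral_image_eq_integral_abs_deriv_smul measurableSet_Ioi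
    (fun v hv => (hasDerivAt_sub_const_div a (ne_of_gt hv)).hasDerivWithinAt)
    (strictMonoOn_sub_const_div_Ioi ha).injOn g
  rw [image_sub_const_div_Ioi ha, Measure.restrict_univ] at h
  rw [h]
  refine setIntegral_congr_fun measurableSet_Ioi fun v _ => ?_
  rw [abs_of_pos (by positivity)]

theorem integrableOn_Ioi_comp_sub_const_div_iff (ha : 0 < a) (g : ℝ → E) :
    IntegrableOn (fun v => (1 + a / v ^ 2) • g (v - a / v)) (Ioi 0) ↔ Integrable g := by
  have h := integrableOn_image_iff_integrableOn_abs_deriv_smul measurableSet_Ioi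
    (fun v hv => (hasDerivAt_sub_const_div a (ne_of_gt hv)).hasDerivWithinAt)
    (strictMonoOn_sub_const_div_Ioi ha).injOn g
  rw [image_sub_const_div_Ioi ha, integrableOn_univ] at h
  rw [h]
  refine integrableOn_congr_fun (fun v _ => ?_) measurableSet_Ioi
  rw [abs_of_pos (by positivity)]

theorem integral_Ioi_comp_sub_const_div_of_even (ha : 0 < a) {g : ℝ → E} (hg : Integrable g)
    (heven : ∀ t, g (-t) = g t) :
    ∫ v in Ioi 0, g (v - a / v) = (2 : ℝ)⁻¹ • ∫ t, g t := by
  have hweighted := (integrableOn_Ioi_comp_sub_const_div_iff ha g).2 hg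
  -- `g` is not assumed measurable, so integrability of `g (v - a / v)` has to come from the
  -- weighted function through the bounded measurable factor `(1 + a / v ^ 2)⁻¹`.
  have hint : IntegrableOn (fun v => g (v - a / v)) (Ioi 0) := by
    have hφ : Measurable fun v : ℝ => (1 + a / v ^ 2)⁻¹ := by fun_prop
    refine IntegrableOn.congr_fun (hweighted.bdd_smul 1 hφ.aestronglyMeasurable ?_)
      (fun v _ => inv_smul_smul₀ (by positivity) _) measurableSet_Ioi
    refine Filter.Eventually.of_forall fun v => ?_
    rw [norm_inv, Real.norm_of_nonneg (by positivity)]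
    exact inv_le_one_of_one_le₀ (le_add_of_nonneg_right (by positivity))
  have hint' : IntegrableOn (fun v => (a / v ^ 2) • g (v - a / v)) (Ioi 0) := by
    refine (hweighted.sub hint).congr_fun (fun v _ => ?_) measurableSet_Ioi
    simp only [Pi.sub_apply, add_smul, one_smul, add_sub_cancel_left]
  have hsymm : ∫ v in Ioi 0, (a / v ^ 2) • g (v - a / v) = ∫ v in Ioi 0, g (v - a / v) := by
    rw [← integral_Ioi_comp_const_div ha fun v => g (v - a / v)]
    refine setIntegral_congr_fun measurableSet_Ioi fun v _ => ?_
    rw [div_div_cancel₀ ha.ne', ← heven, neg_sub]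
  have h := integral_Ioi_comp_sub_const_div ha g
  simp_rw [add_smul, one_smul] at h
  rw [integral_add hint hint', hsymm, ← two_smul ℝ] at h
  rw [← h, smul_smul, inv_mul_cancel₀ two_ne_zero, one_smul]

end

theorem integral_Ioi_exp_neg_sub_div_sq {a : ℝ} (ha : 0 ≤ a) :
    ∫ v in Ioi (0 : ℝ), exp (-(v - a / v) ^ 2) = √π / 2 := by
  rcases ha.eq_or_lt with rfl | ha
  · simpa using integral_gaussian_Ioi 1
  · have hg : Integrable fun t : ℝ => exp (-t ^ 2) := by
      simpa using integrable_exp_neg_mul_sq one_pos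
    rw [integral_Ioi_comp_sub_const_div_of_even ha hg (fun t => by rw [neg_sq]), smul_eq_mul,
      inv_mul_eq_div]
    simpa using integral_gaussian 1

/-- Bochner's subordination formula. -/
theorem bochner_subordination (lam : ℝ) (hlam : 0 ≤ lam) :
    Real.exp (-lam) =
      (1 / Real.sqrt π) *
        ∫ u in Set.Ioi (0 : ℝ),
          (Real.exp (-u) / Real.sqrt u) * Real.exp (-lam ^ 2 / (4 * u)) := by
  have hsubst : ∀ v ∈ Ioi (0 : ℝ),
      (2 * v) • (exp (-v ^ 2) / √(v ^ 2) * exp (-lam ^ 2 / (4 * v ^ 2)))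
        = 2 * exp (-lam) * exp (-(v - lam / 2 / v) ^ 2) := by
    intro v (hv : 0 < v)
    have hexp : -v ^ 2 + -lam ^ 2 / (4 * v ^ 2) = -lam + -(v - lam / 2 / v) ^ 2 := by
      field_simp
      ring
    rw [sqrt_sq hv.le, smul_eq_mul, div_mul_eq_mul_div, ← exp_add, hexp, exp_add]
    field_simp
  rw [← integral_Ioi_comp_sq, setIntegral_congr_fun measurableSet_Ioi hsubst, integral_const_mul,
    integral_Ioi_exp_neg_sub_div_sq (by positivity)]
  field_simp
end

section
/- There exists a dimensional constant C_d such that for all f ∈ L¹(γ_d) and all x ∈ ℝ^d, 𝒯*f(x) ≤ C_d M_{γ_d} f(x), where 𝒯*f(x) = sup{|T_t f(y)| : |y−x| < t^{1/2}, 0 < t < (1/|x|²) ∧ (1/4)} is the truncated non-tangential maximal function of the Ornstein-Uhlenbeck semigroup and M_{γ_d} f(x) = sup_{r>0} γ_d(B(x,r))^{−1} ∫_{B(x,r)} |f| dγ_d is the Hardy-Littlewood maximal function with respect to the Gaussian measure. -/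
open Real MeasureTheory Metric ENNReal NNReal

/-- The Gaussian measure `γ_d` on `ℝ^d`, with density `π^{-d/2} e^{-|x|²}`. -/
noncomputable def gaussianMeasure (d : ℕ) : Measure (EuclideanSpace ℝ (Fin d)) :=
  volume.withDensity fun x => ENNReal.ofReal (π ^ (-(d:ℝ)/2) * Real.exp (-‖x‖ ^ 2))

/-- The Ornstein-Uhlenbeck (Mehler) semigroup. -/
noncomputable def ouSemigroup {d : ℕ} (t : ℝ) (f : EuclideanSpace ℝ (Fin d) → ℝ)
    (x : EuclideanSpace ℝ (Fin d)) : ℝ :=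
  π ^ (-(d:ℝ)/2) * (1 - Real.exp (-2*t)) ^ (-(d:ℝ)/2) *
    ∫ y, Real.exp (-‖y - Real.exp (-t) • x‖ ^ 2 / (1 - Real.exp (-2*t))) * f y

/-- The truncated parabolic gaussian cone `Γ^p(x)`. -/
def truncCone {d : ℕ} (x : EuclideanSpace ℝ (Fin d)) :
    Set ((EuclideanSpace ℝ (Fin d)) × ℝ) :=
  {p | ‖p.1 - x‖ < Real.sqrt p.2 ∧ 0 < p.2 ∧ p.2 < min (1 / ‖x‖ ^ 2) (1/4)}

/-- The truncated non-tangential maximal function of the Ornstein-Uhlenbeck semigroup. -/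
noncomputable def truncNTMaximal {d : ℕ} (f : EuclideanSpace ℝ (Fin d) → ℝ)
    (x : EuclideanSpace ℝ (Fin d)) : ℝ≥0∞ :=
  ⨆ p ∈ truncCone x, ENNReal.ofReal |ouSemigroup p.2 f p.1|

/-- The centered Hardy-Littlewood maximal function with respect to `γ_d`. -/
noncomputable def gaussianMaximal {d : ℕ} (f : EuclideanSpace ℝ (Fin d) → ℝ)
    (x : EuclideanSpace ℝ (Fin d)) : ℝ≥0∞ :=
  ⨆ (r : ℝ) (_ : 0 < r),
    (gaussianMeasure d (ball x r))⁻¹ *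
      ∫⁻ u in ball x r, ENNReal.ofReal |f u| ∂(gaussianMeasure d)

section Aux

variable {d : ℕ}

private lemma alg_id (q U P Y : ℝ) (hq : q ≠ 0) (h1 : 1 - q^2 ≠ 0) :
    -(U - 2*(q*P) + q^2*Y) / (1 - q^2)
      = Y - q^2/(1-q^2) * (U - 2*(q⁻¹*P) + (q⁻¹)^2*Y) - U := by
  field_simp
  ring

private lemma expo_id (u y : EuclideanSpace ℝ (Fin d)) {t : ℝ}
    (hs0 : (1 : ℝ) - Real.exp (-2*t) ≠ 0) :
    -‖u - Real.exp (-t) • y‖ ^ 2 / (1 - Real.exp (-2*t)) =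
      ‖y‖ ^ 2 - Real.exp (-2*t) / (1 - Real.exp (-2*t)) * ‖u - Real.exp t • y‖ ^ 2 - ‖u‖ ^ 2 := by
  have e1 : ‖u - Real.exp (-t) • y‖ ^ 2
      = ‖u‖ ^ 2 - 2 * (Real.exp (-t) * inner ℝ u y) + (Real.exp (-t)) ^ 2 * ‖y‖ ^ 2 := by
    rw [norm_sub_sq_real, real_inner_smul_right, norm_smul]
    simp [mul_pow, abs_of_pos (Real.exp_pos _)]
  have e2 : ‖u - Real.exp t • y‖ ^ 2
      = ‖u‖ ^ 2 - 2 * (Real.exp t * inner ℝ u y) + (Real.exp t) ^ 2 * ‖y‖ ^ 2 := by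
    rw [norm_sub_sq_real, real_inner_smul_right, norm_smul]
    simp [mul_pow, abs_of_pos (Real.exp_pos _)]
  have hq2 : Real.exp (-2*t) = (Real.exp (-t))^2 := by
    rw [← Real.exp_nat_mul]; ring_nf
  have hqi : Real.exp t = (Real.exp (-t))⁻¹ := by
    rw [← Real.exp_neg, neg_neg]
  rw [hq2] at hs0
  rw [e1, e2, hq2, hqi]
  exact alg_id _ _ _ _ (Real.exp_pos _).ne' hs0

private lemma gauss_ball_le (x : EuclideanSpace ℝ (Fin d)) {ρ : ℝ} (hρ : 0 < ρ) :
    gaussianMeasure d (ball x ρ)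
      ≤ ENNReal.ofReal (π ^ (-(d:ℝ)/2) * Real.exp (2*ρ*‖x‖ - ‖x‖^2) * ρ ^ d) *
          volume (ball (0 : EuclideanSpace ℝ (Fin d)) 1) := by
  rw [gaussianMeasure, withDensity_apply _ measurableSet_ball]
  have h1 : ∫⁻ u in ball x ρ, ENNReal.ofReal (π ^ (-(d:ℝ)/2) * Real.exp (-‖u‖ ^ 2)) ∂volume
      ≤ ∫⁻ _ in ball x ρ, ENNReal.ofReal (π ^ (-(d:ℝ)/2) * Real.exp (2*ρ*‖x‖ - ‖x‖^2)) ∂volume := by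
    apply setLIntegral_mono' measurableSet_ball
    intro u hu
    apply ENNReal.ofReal_le_ofReal
    have hπ : (0:ℝ) ≤ π ^ (-(d:ℝ)/2) := (Real.rpow_pos_of_pos Real.pi_pos _).le
    apply mul_le_mul_of_nonneg_left _ hπ
    apply Real.exp_le_exp.2
    have h2 : ‖x - u‖ < ρ := by
      rw [mem_ball, dist_eq_norm] at hu
      rw [← norm_neg]; simpa [neg_sub] using hu
    have hxu : ‖x‖ ≤ ‖u‖ + ρ := by
      calc ‖x‖ = ‖(x - u) + u‖ := by rw [sub_add_cancel]
        _ ≤ ‖x - u‖ + ‖u‖ := norm_add_le _ _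
        _ ≤ ‖u‖ + ρ := by linarith
    nlinarith [norm_nonneg u, norm_nonneg x, hρ.le, sq_nonneg (‖x‖ - ρ - ‖u‖),
      mul_nonneg hρ.le (norm_nonneg x), mul_nonneg (norm_nonneg u) (norm_nonneg x)]
  refine le_trans h1 ?_
  rw [setLIntegral_const, Measure.addHaar_ball_of_pos _ x hρ, finrank_euclideanSpace_fin,
    ← mul_assoc, ← ENNReal.ofReal_mul (by positivity)]

private lemma gauss_ball_ne_top (x : EuclideanSpace ℝ (Fin d)) {ρ : ℝ} (hρ : 0 < ρ) :
    gaussianMeasure d (ball x ρ) ≠ ⊤ := by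
  refine ne_top_of_le_ne_top ?_ (gauss_ball_le x hρ)
  exact (ENNReal.mul_lt_top ENNReal.ofReal_lt_top measure_ball_lt_top).ne

private lemma lintegral_ball_le_maximal (f : EuclideanSpace ℝ (Fin d) → ℝ)
    (x : EuclideanSpace ℝ (Fin d)) {ρ : ℝ} (hρ : 0 < ρ) :
    ∫⁻ u in ball x ρ, ENNReal.ofReal |f u| ∂(gaussianMeasure d)
      ≤ gaussianMeasure d (ball x ρ) * gaussianMaximal f x := by
  by_cases h0 : gaussianMeasure d (ball x ρ) = 0
  · rw [Measure.restrict_eq_zero.2 h0]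
    simp
  · have hmax : (gaussianMeasure d (ball x ρ))⁻¹ *
        ∫⁻ u in ball x ρ, ENNReal.ofReal |f u| ∂(gaussianMeasure d) ≤ gaussianMaximal f x := by
      refine le_trans ?_ (le_iSup _ ρ)
      rw [iSup_pos hρ]
    calc ∫⁻ u in ball x ρ, ENNReal.ofReal |f u| ∂(gaussianMeasure d)
        = gaussianMeasure d (ball x ρ) * ((gaussianMeasure d (ball x ρ))⁻¹ *
            ∫⁻ u in ball x ρ, ENNReal.ofReal |f u| ∂(gaussianMeasure d)) := by
          rw [← mul_assoc, ENNReal.mul_inv_cancel h0 (gauss_ball_ne_top x hρ), one_mul]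
      _ ≤ _ := mul_le_mul_right hmax _

private lemma scalar_k (k d : ℕ) {t s xn : ℝ} (ht : 0 < t) (hts : t ≤ s)
    (hxt : xn * Real.sqrt t ≤ 1) :
    π ^ (-(d:ℝ)/2) * s ^ (-(d:ℝ)/2) * (π ^ ((d:ℝ)/2) * Real.exp (xn^2 + 9/4)) *
      (Real.exp (4 - ((2:ℝ)^k)^2/16) *
        (π ^ (-(d:ℝ)/2) * Real.exp (2*(2^(k+1)*Real.sqrt t)*xn - xn^2) *
          (2^(k+1)*Real.sqrt t)^d))
    ≤ π ^ (-(d:ℝ)/2) * Real.exp (25/4 + 256*((d:ℝ)+3)^2) * (1/2)^k := by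
  have hs : 0 < s := lt_of_lt_of_le ht hts
  have hπ1 : π ^ (-(d:ℝ)/2) * π ^ ((d:ℝ)/2) = 1 := by
    rw [← Real.rpow_add Real.pi_pos, neg_div, neg_add_cancel, Real.rpow_zero]
  have hst : s ^ (-(d:ℝ)/2) * Real.sqrt t ^ d ≤ 1 := by
    have h1 : (Real.sqrt t : ℝ) ^ d = t ^ ((1/2) * (d:ℝ)) := by
      rw [Real.rpow_mul ht.le, ← Real.sqrt_eq_rpow, Real.rpow_natCast]
    have h2 : s ^ (-(d:ℝ)/2) = (s ^ ((1/2) * (d:ℝ)))⁻¹ := by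
      rw [show -(d:ℝ)/2 = -((1/2) * (d:ℝ)) by ring, Real.rpow_neg hs.le]
    rw [h1, h2, ← div_eq_inv_mul, div_le_one (Real.rpow_pos_of_pos hs _)]
    exact Real.rpow_le_rpow ht.le hts (by positivity)
  have h2d : (2:ℝ) ^ ((k+1)*d) ≤ Real.exp ((d:ℝ) * 2^(k+1)) := by
    have e1 : (2:ℝ) ^ ((k+1)*d) ≤ Real.exp 1 ^ ((k+1)*d) := by
      apply pow_le_pow_left₀ (by norm_num)
      have := Real.exp_one_gt_d9; linarith
    have e2 : Real.exp 1 ^ ((k+1)*d) = Real.exp (((k+1)*d : ℕ) : ℝ) := by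
      rw [← Real.exp_nat_mul, mul_one]
    have e3 : (((k+1)*d : ℕ) : ℝ) ≤ (d:ℝ) * 2^(k+1) := by
      push_cast
      have hk : ((k:ℝ)+1) ≤ 2^(k+1) := by
        have := Nat.lt_two_pow_self (n := k+1)
        have h := Nat.cast_lt (α := ℝ) |>.2 this
        push_cast at h; linarith
      nlinarith [Nat.cast_nonneg (α := ℝ) d]
    calc (2:ℝ) ^ ((k+1)*d) ≤ Real.exp (((k+1)*d : ℕ) : ℝ) := e2 ▸ e1
      _ ≤ _ := Real.exp_le_exp.2 e3
  have hxt2 : 2*(2^(k+1)*Real.sqrt t)*xn - xn^2 ≤ (2:ℝ)^(k+2) - xn^2 := by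
    have hp : (0:ℝ) < 2^(k+1) := by positivity
    have := mul_le_mul_of_nonneg_left hxt (le_of_lt (by positivity : (0:ℝ) < 2*2^(k+1)))
    have h2 : (2:ℝ)^(k+2) = 2*2^(k+1) := by rw [pow_succ]; ring
    nlinarith [Real.sqrt_nonneg t]
  have hEfin : Real.exp ((d:ℝ)*2^(k+1)) * (Real.exp (xn^2 + 9/4) *
      (Real.exp (4 - ((2:ℝ)^k)^2/16) * Real.exp ((2:ℝ)^(k+2) - xn^2)))
      ≤ Real.exp (25/4 + 256*((d:ℝ)+3)^2) * (1/2)^k := by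
    rw [← Real.exp_add, ← Real.exp_add, ← Real.exp_add]
    have hk12 : Real.exp (-(k:ℝ)) ≤ (1/2)^k := by
      have h : Real.exp (-(k:ℝ)) = Real.exp (-1) ^ k := by
        rw [← Real.exp_nat_mul]; ring_nf
      rw [h]
      apply pow_le_pow_left₀ (Real.exp_pos _).le
      rw [Real.exp_neg]
      rw [show (1:ℝ)/2 = 2⁻¹ by norm_num, inv_le_inv₀ (Real.exp_pos _) two_pos]
      have := Real.exp_one_gt_d9; linarith
    have hexpo : (d:ℝ)*2^(k+1) + (xn^2 + 9/4 + (4 - ((2:ℝ)^k)^2/16 + ((2:ℝ)^(k+2) - xn^2)))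
        ≤ 25/4 + 256*((d:ℝ)+3)^2 + (-(k:ℝ)) := by
      have hc1 : (1:ℝ) ≤ 2^k := one_le_pow₀ (by norm_num)
      have hck : (k:ℝ) + 1 ≤ 2*2^k := by
        have := Nat.lt_two_pow_self (n := k)
        have h := Nat.cast_lt (α := ℝ) |>.2 this
        push_cast at h; nlinarith
      have h1 : (2:ℝ)^(k+1) = 2*2^k := by rw [pow_succ]; ring
      have h2 : (2:ℝ)^(k+2) = 4*2^k := by rw [pow_succ, pow_succ]; ring
      rw [h1, h2]
      nlinarith [sq_nonneg ((2:ℝ)^k/4 - 4*((d:ℝ)+3)), Nat.cast_nonneg (α := ℝ) d,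
        Nat.cast_nonneg (α := ℝ) k, sq_nonneg ((2:ℝ)^k)]
    calc Real.exp _ ≤ Real.exp (25/4 + 256*((d:ℝ)+3)^2 + (-(k:ℝ))) := Real.exp_le_exp.2 hexpo
      _ = Real.exp (25/4 + 256*((d:ℝ)+3)^2) * Real.exp (-(k:ℝ)) := by rw [Real.exp_add]
      _ ≤ _ := mul_le_mul_of_nonneg_left hk12 (Real.exp_pos _).le
  calc π ^ (-(d:ℝ)/2) * s ^ (-(d:ℝ)/2) * (π ^ ((d:ℝ)/2) * Real.exp (xn^2 + 9/4)) *
      (Real.exp (4 - ((2:ℝ)^k)^2/16) *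
        (π ^ (-(d:ℝ)/2) * Real.exp (2*(2^(k+1)*Real.sqrt t)*xn - xn^2) *
          (2^(k+1)*Real.sqrt t)^d))
      = (π ^ (-(d:ℝ)/2) * π ^ ((d:ℝ)/2)) * (π ^ (-(d:ℝ)/2) *
          ((s ^ (-(d:ℝ)/2) * Real.sqrt t ^ d) * ((2:ℝ) ^ ((k+1)*d) *
            (Real.exp (xn^2 + 9/4) *
              (Real.exp (4 - ((2:ℝ)^k)^2/16) *
                Real.exp (2*(2^(k+1)*Real.sqrt t)*xn - xn^2)))))) := by
        rw [mul_pow, ← pow_mul]; ring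
    _ ≤ 1 * (π ^ (-(d:ℝ)/2) *
          (1 * (Real.exp ((d:ℝ)*2^(k+1)) *
            (Real.exp (xn^2 + 9/4) *
              (Real.exp (4 - ((2:ℝ)^k)^2/16) *
                Real.exp ((2:ℝ)^(k+2) - xn^2)))))) := by
        rw [hπ1]
        gcongr
    _ = π ^ (-(d:ℝ)/2) * (Real.exp ((d:ℝ)*2^(k+1)) *
          (Real.exp (xn^2 + 9/4) *
            (Real.exp (4 - ((2:ℝ)^k)^2/16) * Real.exp ((2:ℝ)^(k+2) - xn^2)))) := by ring
    _ ≤ π ^ (-(d:ℝ)/2) * (Real.exp (25/4 + 256*((d:ℝ)+3)^2) * (1/2)^k) :=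
        mul_le_mul_of_nonneg_left hEfin (Real.rpow_pos_of_pos Real.pi_pos _).le
    _ = _ := by ring

private lemma key_tsum (x b u : EuclideanSpace ℝ (Fin d)) {t α : ℝ} (ht : 0 < t) (hα0 : 0 ≤ α)
    (hα : 1/(4*t) ≤ α) (hxb : ‖x - b‖ ≤ 3 * Real.sqrt t) :
    ENNReal.ofReal (Real.exp (-(α * ‖u - b‖^2)))
      ≤ ∑' k : ℕ, (ball x (2^(k+1) * Real.sqrt t)).indicator
          (fun _ => ENNReal.ofReal (Real.exp (4 - ((2:ℝ)^k)^2/16))) u := by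
  have hsqpos : 0 < Real.sqrt t := Real.sqrt_pos.2 ht
  have hsq : Real.sqrt t ^ 2 = t := Real.sq_sqrt ht.le
  by_cases hu : ‖u - x‖ < 2^(3+1) * Real.sqrt t
  · refine le_trans ?_ (ENNReal.le_tsum 3)
    rw [Set.indicator_of_mem (by rw [mem_ball_iff_norm]; exact hu)]
    apply ENNReal.ofReal_le_ofReal
    apply Real.exp_le_exp.2
    have h0 : (0:ℝ) ≤ α * ‖u - b‖^2 := by positivity
    norm_num
    linarith
  · push_neg at hu
    have hex : ∃ n : ℕ, ‖u - x‖ < 2^(n+1) * Real.sqrt t := by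
      obtain ⟨n, hn⟩ := pow_unbounded_of_one_lt (‖u - x‖ / Real.sqrt t) (one_lt_two (α := ℝ))
      rw [div_lt_iff₀ hsqpos] at hn
      refine ⟨n, lt_of_lt_of_le hn ?_⟩
      have : (2:ℝ)^n ≤ 2^(n+1) := pow_le_pow_right₀ one_le_two (by omega)
      nlinarith
    have hspec : ‖u - x‖ < 2^(Nat.find hex + 1) * Real.sqrt t := Nat.find_spec hex
    set k0 := Nat.find hex with hk0def
    have h3le : 3 ≤ k0 := by
      by_contra h
      push_neg at h
      have hle : (2:ℝ)^(k0+1) ≤ 2^(3+1) := pow_le_pow_right₀ one_le_two (by omega)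
      nlinarith
    have hmin : 2^k0 * Real.sqrt t ≤ ‖u - x‖ := by
      have hmin' := Nat.find_min hex (show k0 - 1 < k0 by omega)
      push_neg at hmin'
      rwa [show k0 - 1 + 1 = k0 by omega] at hmin'
    refine le_trans ?_ (ENNReal.le_tsum k0)
    rw [Set.indicator_of_mem (by rw [mem_ball_iff_norm]; exact hspec)]
    apply ENNReal.ofReal_le_ofReal
    apply Real.exp_le_exp.2
    have h8 : (6:ℝ) ≤ 2^k0 := by
      calc (6:ℝ) ≤ 2^3 := by norm_num
        _ ≤ 2^k0 := pow_le_pow_right₀ one_le_two h3le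
    have hub : 2^k0/2 * Real.sqrt t ≤ ‖u - b‖ := by
      have htri : ‖u - x‖ ≤ ‖u - b‖ + ‖x - b‖ := by
        have h1 : u - x = (u - b) + (b - x) := by abel
        rw [h1]
        have := norm_add_le (u - b) (b - x)
        rwa [norm_sub_rev b x] at this
      nlinarith
    have h1 : (2^k0/2 * Real.sqrt t)^2 ≤ ‖u - b‖^2 := by
      apply pow_le_pow_left₀ (by positivity) hub
    have hαb : ((2:ℝ)^k0)^2/16 ≤ α * ‖u - b‖^2 := by
      have h2 : ((2:ℝ)^k0/2 * Real.sqrt t)^2 = ((2:ℝ)^k0)^2/4 * t := by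
        rw [mul_pow, hsq]; ring
      calc ((2:ℝ)^k0)^2/16 = 1/(4*t) * (((2:ℝ)^k0)^2/4 * t) := by field_simp; ring
        _ ≤ α * ‖u - b‖^2 := by
            apply mul_le_mul hα (h2 ▸ h1) (by positivity) (le_trans (by positivity) hα)
    linarith

set_option maxHeartbeats 1000000 in
private lemma core (f : EuclideanSpace ℝ (Fin d) → ℝ) (hf : Integrable f (gaussianMeasure d))
    (x y : EuclideanSpace ℝ (Fin d)) (t : ℝ)
    (hyx : ‖y - x‖ < Real.sqrt t) (ht : 0 < t) (htm : t < min (1 / ‖x‖ ^ 2) (1/4)) :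
    ENNReal.ofReal |ouSemigroup t f y|
      ≤ ENNReal.ofReal (π ^ (-(d:ℝ)/2) * Real.exp (25/4 + 256*((d:ℝ)+3)^2)) * 2 *
          volume (ball (0 : EuclideanSpace ℝ (Fin d)) 1) * gaussianMaximal f x := by
  have ht4 : t < 1/4 := lt_of_lt_of_le htm (min_le_right _ _)
  have hsq : Real.sqrt t ^ 2 = t := Real.sq_sqrt ht.le
  have hsqpos : 0 < Real.sqrt t := Real.sqrt_pos.2 ht
  have hxt : ‖x‖ * Real.sqrt t ≤ 1 := by
    have h1 : t < 1 / ‖x‖^2 := lt_of_lt_of_le htm (min_le_left _ _)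
    by_cases hx0 : ‖x‖ = 0
    · rw [hx0]; norm_num
    · have hx : 0 < ‖x‖ := lt_of_le_of_ne (norm_nonneg x) (Ne.symm hx0)
      have h2 : t * ‖x‖^2 < 1 := by
        rw [lt_div_iff₀ (by positivity)] at h1; linarith
      nlinarith [mul_pos hx hsqpos, sq_nonneg (‖x‖ * Real.sqrt t - 1)]
  have hs_pos : 0 < 1 - Real.exp (-2*t) := by
    have h : Real.exp (-2*t) < 1 := by
      rw [← Real.exp_zero]
      exact Real.exp_lt_exp.2 (by linarith)
    linarith
  have hs_le : 1 - Real.exp (-2*t) ≤ 2*t := by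
    have := Real.add_one_le_exp (-2*t); linarith
  have hts : t ≤ 1 - Real.exp (-2*t) := by
    have h1 := Real.add_one_le_exp (2*t)
    have h2 : Real.exp (-2*t) * Real.exp (2*t) = 1 := by
      rw [← Real.exp_add]; norm_num
    nlinarith [Real.exp_pos (-2*t)]
  have hy : ‖y‖ ≤ ‖x‖ + Real.sqrt t := by
    have h1 : ‖y‖ = ‖x + (y - x)‖ := by rw [add_comm, sub_add_cancel]
    calc ‖y‖ = ‖x + (y - x)‖ := h1
      _ ≤ ‖x‖ + ‖y - x‖ := norm_add_le _ _
      _ ≤ _ := by linarith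
  have hy2 : ‖y‖^2 ≤ ‖x‖^2 + 9/4 := by
    nlinarith [norm_nonneg y, norm_nonneg x, hsqpos, hxt, hsq, ht4]
  have hxb : ‖x - Real.exp t • y‖ ≤ 3 * Real.sqrt t := by
    have het : Real.exp t - 1 ≤ (4/3)*t := by
      have h1 := Real.add_one_le_exp (-t)
      have h2 : Real.exp (-t) * Real.exp t = 1 := by
        rw [← Real.exp_add]; norm_num
      nlinarith [Real.exp_pos t, Real.exp_pos (-t)]
    have hyb : ‖y - Real.exp t • y‖ = (Real.exp t - 1) * ‖y‖ := by
      have h1 : y - Real.exp t • y = -((Real.exp t - 1) • y) := by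
        rw [sub_smul, one_smul]; abel
      rw [h1, norm_neg, norm_smul, Real.norm_eq_abs, abs_of_nonneg]
      have := Real.add_one_le_exp t; linarith
    have htri : ‖x - Real.exp t • y‖ ≤ ‖x - y‖ + ‖y - Real.exp t • y‖ := by
      have h1 : x - Real.exp t • y = (x - y) + (y - Real.exp t • y) := by abel
      rw [h1]; exact norm_add_le _ _
    have hxy : ‖x - y‖ < Real.sqrt t := by rwa [norm_sub_rev]
    have hty : (Real.exp t - 1) * ‖y‖ ≤ (4/3)*t*(‖x‖ + Real.sqrt t) := by
      apply mul_le_mul het hy (norm_nonneg y) (by positivity)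
    have htx : t * ‖x‖ ≤ Real.sqrt t := by
      calc t * ‖x‖ = Real.sqrt t * (‖x‖ * Real.sqrt t) := by
            linear_combination (-‖x‖) * hsq
        _ ≤ Real.sqrt t * 1 := by
            apply mul_le_mul_of_nonneg_left hxt hsqpos.le
        _ = Real.sqrt t := mul_one _
    have htt : t * Real.sqrt t ≤ (1/4) * Real.sqrt t := by nlinarith
    nlinarith [hyb, htri, hxy, hty, htx, htt]
  have hα0 : (0:ℝ) ≤ Real.exp (-2*t) / (1 - Real.exp (-2*t)) := by positivity
  have hα : 1/(4*t) ≤ Real.exp (-2*t) / (1 - Real.exp (-2*t)) := by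
    rw [div_le_div_iff₀ (by positivity) hs_pos]
    nlinarith [Real.add_one_le_exp (-2*t)]
  -- step 1
  have step1 : ENNReal.ofReal |ouSemigroup t f y| ≤
      ENNReal.ofReal (π ^ (-(d:ℝ)/2) * (1 - Real.exp (-2*t)) ^ (-(d:ℝ)/2)) *
        ∫⁻ u, ENNReal.ofReal
          ‖Real.exp (-‖u - Real.exp (-t) • y‖ ^ 2 / (1 - Real.exp (-2*t))) * f u‖ ∂volume := by
    rw [ouSemigroup]
    have hc1 : (0:ℝ) ≤ π ^ (-(d:ℝ)/2) * (1 - Real.exp (-2*t)) ^ (-(d:ℝ)/2) :=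
      mul_nonneg (Real.rpow_pos_of_pos Real.pi_pos _).le (Real.rpow_pos_of_pos hs_pos _).le
    rw [abs_mul, abs_of_nonneg hc1, ENNReal.ofReal_mul hc1]
    apply mul_le_mul_right
    calc ENNReal.ofReal |∫ u, Real.exp (-‖u - Real.exp (-t) • y‖ ^ 2 / (1 - Real.exp (-2*t))) * f u|
        = ENNReal.ofReal
            ‖∫ u, Real.exp (-‖u - Real.exp (-t) • y‖ ^ 2 / (1 - Real.exp (-2*t))) * f u‖ := by
          rw [Real.norm_eq_abs]
      _ ≤ ENNReal.ofReal ((∫⁻ u, ENNReal.ofReal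
            ‖Real.exp (-‖u - Real.exp (-t) • y‖ ^ 2 / (1 - Real.exp (-2*t))) * f u‖
              ∂volume).toReal) :=
          ENNReal.ofReal_le_ofReal (norm_integral_le_lintegral_norm _)
      _ ≤ _ := ENNReal.ofReal_toReal_le
  -- step 2
  have hfa : AEMeasurable (fun u => |f u|) (gaussianMeasure d) := by
    have := hf.aestronglyMeasurable.norm.aemeasurable
    simpa [Real.norm_eq_abs] using this
  have step2 : (∫⁻ u, ENNReal.ofReal
        ‖Real.exp (-‖u - Real.exp (-t) • y‖ ^ 2 / (1 - Real.exp (-2*t))) * f u‖ ∂volume)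
      = ∫⁻ u, ENNReal.ofReal (π ^ ((d:ℝ)/2) *
          Real.exp (‖y‖^2 - Real.exp (-2*t) / (1 - Real.exp (-2*t)) * ‖u - Real.exp t • y‖^2)
            * |f u|) ∂(gaussianMeasure d) := by
    have hcont : Continuous (fun u : EuclideanSpace ℝ (Fin d) => π ^ ((d:ℝ)/2) *
        Real.exp (‖y‖^2 - Real.exp (-2*t) / (1 - Real.exp (-2*t)) * ‖u - Real.exp t • y‖^2)) := by
      fun_prop
    have hmeas : AEMeasurable (fun u => ENNReal.ofReal (π ^ ((d:ℝ)/2) *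
        Real.exp (‖y‖^2 - Real.exp (-2*t) / (1 - Real.exp (-2*t)) * ‖u - Real.exp t • y‖^2)
          * |f u|)) (gaussianMeasure d) :=
      (hcont.aemeasurable.mul hfa).ennreal_ofReal
    have hρ : AEMeasurable (fun u : EuclideanSpace ℝ (Fin d) =>
        ENNReal.ofReal (π ^ (-(d:ℝ)/2) * Real.exp (-‖u‖ ^ 2))) volume := by
      apply Measurable.aemeasurable
      apply Measurable.ennreal_ofReal
      fun_prop
    rw [gaussianMeasure] at hmeas ⊢
    rw [lintegral_withDensity_eq_lintegral_mul₀' hρ hmeas]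
    apply lintegral_congr
    intro u
    simp only [Pi.mul_apply]
    rw [← ENNReal.ofReal_mul (by positivity)]
    congr 1
    rw [norm_mul, Real.norm_eq_abs, Real.norm_eq_abs, abs_of_pos (Real.exp_pos _)]
    rw [expo_id u y hs_pos.ne']
    have hπ1 : π ^ (-(d:ℝ)/2) * π ^ ((d:ℝ)/2) = 1 := by
      rw [← Real.rpow_add Real.pi_pos, neg_div, neg_add_cancel, Real.rpow_zero]
    rw [show ‖y‖ ^ 2 - Real.exp (-2*t) / (1 - Real.exp (-2*t)) * ‖u - Real.exp t • y‖ ^ 2 - ‖u‖ ^ 2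
        = (-‖u‖ ^ 2) + (‖y‖^2 - Real.exp (-2*t) / (1 - Real.exp (-2*t)) * ‖u - Real.exp t • y‖^2)
        from by ring, Real.exp_add]
    linear_combination (-(Real.exp (-‖u‖^2)) *
      Real.exp (‖y‖^2 - Real.exp (-2*t) / (1 - Real.exp (-2*t)) * ‖u - Real.exp t • y‖^2)
        * |f u|) * hπ1
  -- step 3 : pointwise bound and tsum
  have hptw : ∀ u, ENNReal.ofReal (π ^ ((d:ℝ)/2) *
      Real.exp (‖y‖^2 - Real.exp (-2*t) / (1 - Real.exp (-2*t)) * ‖u - Real.exp t • y‖^2)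
        * |f u|)
      ≤ ENNReal.ofReal (π ^ ((d:ℝ)/2) * Real.exp (‖x‖^2 + 9/4)) *
          ((∑' k : ℕ, (ball x (2^(k+1) * Real.sqrt t)).indicator
            (fun _ => ENNReal.ofReal (Real.exp (4 - ((2:ℝ)^k)^2/16))) u) *
              ENNReal.ofReal |f u|) := by
    intro u
    have e : π ^ ((d:ℝ)/2) *
        Real.exp (‖y‖^2 - Real.exp (-2*t) / (1 - Real.exp (-2*t)) * ‖u - Real.exp t • y‖^2)
          * |f u|
        = (π ^ ((d:ℝ)/2) * Real.exp (‖y‖^2)) *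
            (Real.exp (-(Real.exp (-2*t) / (1 - Real.exp (-2*t)) * ‖u - Real.exp t • y‖^2))
              * |f u|) := by
      rw [show ‖y‖^2 - Real.exp (-2*t) / (1 - Real.exp (-2*t)) * ‖u - Real.exp t • y‖^2
          = ‖y‖^2 + (-(Real.exp (-2*t) / (1 - Real.exp (-2*t)) * ‖u - Real.exp t • y‖^2))
          from by ring, Real.exp_add]
      ring
    rw [e, ENNReal.ofReal_mul (by positivity), ENNReal.ofReal_mul (Real.exp_pos _).le]
    have h1 : ENNReal.ofReal (π ^ ((d:ℝ)/2) * Real.exp (‖y‖^2))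
        ≤ ENNReal.ofReal (π ^ ((d:ℝ)/2) * Real.exp (‖x‖^2 + 9/4)) := by
      apply ENNReal.ofReal_le_ofReal
      apply mul_le_mul_of_nonneg_left (Real.exp_le_exp.2 hy2)
        (Real.rpow_pos_of_pos Real.pi_pos _).le
    exact mul_le_mul' h1 (mul_le_mul' (key_tsum x _ u ht hα0 hα hxb) le_rfl)

  -- step 3 lintegral form
  have hint_meas : ∀ k : ℕ, AEMeasurable (fun u =>
      (ball x (2^(k+1) * Real.sqrt t)).indicator
        (fun _ => ENNReal.ofReal (Real.exp (4 - ((2:ℝ)^k)^2/16))) u * ENNReal.ofReal |f u|)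
      (gaussianMeasure d) := fun k =>
    (measurable_const.indicator measurableSet_ball).aemeasurable.mul hfa.ennreal_ofReal
  have step3 : (∫⁻ u, ENNReal.ofReal (π ^ ((d:ℝ)/2) *
        Real.exp (‖y‖^2 - Real.exp (-2*t) / (1 - Real.exp (-2*t)) * ‖u - Real.exp t • y‖^2)
          * |f u|) ∂(gaussianMeasure d))
      ≤ ENNReal.ofReal (π ^ ((d:ℝ)/2) * Real.exp (‖x‖^2 + 9/4)) *
          ∑' k : ℕ, ENNReal.ofReal (Real.exp (4 - ((2:ℝ)^k)^2/16)) *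
            ∫⁻ u in ball x (2^(k+1) * Real.sqrt t),
              ENNReal.ofReal |f u| ∂(gaussianMeasure d) := by
    calc (∫⁻ u, ENNReal.ofReal (π ^ ((d:ℝ)/2) *
          Real.exp (‖y‖^2 - Real.exp (-2*t) / (1 - Real.exp (-2*t)) * ‖u - Real.exp t • y‖^2)
            * |f u|) ∂(gaussianMeasure d))
        ≤ ∫⁻ u, ENNReal.ofReal (π ^ ((d:ℝ)/2) * Real.exp (‖x‖^2 + 9/4)) *
            ((∑' k : ℕ, (ball x (2^(k+1) * Real.sqrt t)).indicator
              (fun _ => ENNReal.ofReal (Real.exp (4 - ((2:ℝ)^k)^2/16))) u) *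
                ENNReal.ofReal |f u|) ∂(gaussianMeasure d) := lintegral_mono hptw
      _ = ENNReal.ofReal (π ^ ((d:ℝ)/2) * Real.exp (‖x‖^2 + 9/4)) *
            ∫⁻ u, (∑' k : ℕ, (ball x (2^(k+1) * Real.sqrt t)).indicator
              (fun _ => ENNReal.ofReal (Real.exp (4 - ((2:ℝ)^k)^2/16))) u) *
                ENNReal.ofReal |f u| ∂(gaussianMeasure d) :=
          lintegral_const_mul' _ _ ENNReal.ofReal_ne_top
      _ = ENNReal.ofReal (π ^ ((d:ℝ)/2) * Real.exp (‖x‖^2 + 9/4)) *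
            ∫⁻ u, ∑' k : ℕ, ((ball x (2^(k+1) * Real.sqrt t)).indicator
              (fun _ => ENNReal.ofReal (Real.exp (4 - ((2:ℝ)^k)^2/16))) u *
                ENNReal.ofReal |f u|) ∂(gaussianMeasure d) := by
          congr 1
          apply lintegral_congr
          intro u
          exact ENNReal.tsum_mul_right.symm
      _ = ENNReal.ofReal (π ^ ((d:ℝ)/2) * Real.exp (‖x‖^2 + 9/4)) *
            ∑' k : ℕ, ∫⁻ u, (ball x (2^(k+1) * Real.sqrt t)).indicator
              (fun _ => ENNReal.ofReal (Real.exp (4 - ((2:ℝ)^k)^2/16))) u *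
                ENNReal.ofReal |f u| ∂(gaussianMeasure d) := by
          rw [lintegral_tsum hint_meas]
      _ = ENNReal.ofReal (π ^ ((d:ℝ)/2) * Real.exp (‖x‖^2 + 9/4)) *
            ∑' k : ℕ, ENNReal.ofReal (Real.exp (4 - ((2:ℝ)^k)^2/16)) *
              ∫⁻ u in ball x (2^(k+1) * Real.sqrt t),
                ENNReal.ofReal |f u| ∂(gaussianMeasure d) := by
          congr 1
          apply tsum_congr
          intro k
          have heq : ∀ u, (ball x (2^(k+1) * Real.sqrt t)).indicator
              (fun _ => ENNReal.ofReal (Real.exp (4 - ((2:ℝ)^k)^2/16))) u *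
                ENNReal.ofReal |f u|
              = (ball x (2^(k+1) * Real.sqrt t)).indicator
                  (fun v => ENNReal.ofReal (Real.exp (4 - ((2:ℝ)^k)^2/16)) *
                    ENNReal.ofReal |f v|) u := by
            intro u
            by_cases h : u ∈ ball x (2^(k+1) * Real.sqrt t) <;>
              simp [Set.indicator_of_mem, Set.indicator_of_notMem, h]
          rw [lintegral_congr heq, lintegral_indicator measurableSet_ball,
            lintegral_const_mul' _ _ ENNReal.ofReal_ne_top]
  -- per-k bound
  have perk : ∀ k : ℕ,
      ENNReal.ofReal (π ^ (-(d:ℝ)/2) * (1 - Real.exp (-2*t)) ^ (-(d:ℝ)/2)) *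
        (ENNReal.ofReal (π ^ ((d:ℝ)/2) * Real.exp (‖x‖^2 + 9/4)) *
          (ENNReal.ofReal (Real.exp (4 - ((2:ℝ)^k)^2/16)) *
            (gaussianMeasure d (ball x (2^(k+1) * Real.sqrt t)) * gaussianMaximal f x)))
      ≤ ENNReal.ofReal (π ^ (-(d:ℝ)/2) * Real.exp (25/4 + 256*((d:ℝ)+3)^2) * (1/2)^k) *
          (volume (ball (0 : EuclideanSpace ℝ (Fin d)) 1) * gaussianMaximal f x) := by
    intro k
    have hρpos : (0:ℝ) < 2^(k+1) * Real.sqrt t := by positivity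
    calc ENNReal.ofReal (π ^ (-(d:ℝ)/2) * (1 - Real.exp (-2*t)) ^ (-(d:ℝ)/2)) *
        (ENNReal.ofReal (π ^ ((d:ℝ)/2) * Real.exp (‖x‖^2 + 9/4)) *
          (ENNReal.ofReal (Real.exp (4 - ((2:ℝ)^k)^2/16)) *
            (gaussianMeasure d (ball x (2^(k+1) * Real.sqrt t)) * gaussianMaximal f x)))
        ≤ ENNReal.ofReal (π ^ (-(d:ℝ)/2) * (1 - Real.exp (-2*t)) ^ (-(d:ℝ)/2)) *
            (ENNReal.ofReal (π ^ ((d:ℝ)/2) * Real.exp (‖x‖^2 + 9/4)) *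
              (ENNReal.ofReal (Real.exp (4 - ((2:ℝ)^k)^2/16)) *
                ((ENNReal.ofReal (π ^ (-(d:ℝ)/2) *
                    Real.exp (2*(2^(k+1)*Real.sqrt t)*‖x‖ - ‖x‖^2) * (2^(k+1)*Real.sqrt t) ^ d) *
                  volume (ball (0 : EuclideanSpace ℝ (Fin d)) 1)) * gaussianMaximal f x))) := by
          gcongr
          exact gauss_ball_le x hρpos
      _ = (ENNReal.ofReal (π ^ (-(d:ℝ)/2) * (1 - Real.exp (-2*t)) ^ (-(d:ℝ)/2)) *
            ENNReal.ofReal (π ^ ((d:ℝ)/2) * Real.exp (‖x‖^2 + 9/4)) *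
            (ENNReal.ofReal (Real.exp (4 - ((2:ℝ)^k)^2/16)) *
              ENNReal.ofReal (π ^ (-(d:ℝ)/2) *
                Real.exp (2*(2^(k+1)*Real.sqrt t)*‖x‖ - ‖x‖^2) * (2^(k+1)*Real.sqrt t) ^ d))) *
            (volume (ball (0 : EuclideanSpace ℝ (Fin d)) 1) * gaussianMaximal f x) := by
          ring
      _ ≤ ENNReal.ofReal (π ^ (-(d:ℝ)/2) * Real.exp (25/4 + 256*((d:ℝ)+3)^2) * (1/2)^k) *
            (volume (ball (0 : EuclideanSpace ℝ (Fin d)) 1) * gaussianMaximal f x) := by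
          apply mul_le_mul_left
          rw [← ENNReal.ofReal_mul (by positivity), ← ENNReal.ofReal_mul (by positivity),
            ← ENNReal.ofReal_mul (by positivity)]
          apply ENNReal.ofReal_le_ofReal
          calc π ^ (-(d:ℝ)/2) * (1 - Real.exp (-2*t)) ^ (-(d:ℝ)/2) *
                (π ^ ((d:ℝ)/2) * Real.exp (‖x‖^2 + 9/4)) *
                (Real.exp (4 - ((2:ℝ)^k)^2/16) *
                  (π ^ (-(d:ℝ)/2) * Real.exp (2*(2^(k+1)*Real.sqrt t)*‖x‖ - ‖x‖^2) *
                    (2^(k+1)*Real.sqrt t) ^ d))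
              = π ^ (-(d:ℝ)/2) * (1 - Real.exp (-2*t)) ^ (-(d:ℝ)/2) *
                (π ^ ((d:ℝ)/2) * Real.exp (‖x‖^2 + 9/4)) *
                (Real.exp (4 - ((2:ℝ)^k)^2/16) *
                  (π ^ (-(d:ℝ)/2) * Real.exp (2*(2^(k+1)*Real.sqrt t)*‖x‖ - ‖x‖^2) *
                    (2^(k+1)*Real.sqrt t) ^ d)) := rfl
            _ ≤ _ := scalar_k k d ht hts hxt
  -- final assembly
  have hA0 : (0:ℝ) ≤ π ^ (-(d:ℝ)/2) * Real.exp (25/4 + 256*((d:ℝ)+3)^2) := by positivity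
  have hsum : (∑' k : ℕ, ENNReal.ofReal
      (π ^ (-(d:ℝ)/2) * Real.exp (25/4 + 256*((d:ℝ)+3)^2) * (1/2:ℝ)^k))
      = ENNReal.ofReal (π ^ (-(d:ℝ)/2) * Real.exp (25/4 + 256*((d:ℝ)+3)^2)) * 2 := by
    have h1 : ∀ k : ℕ, ENNReal.ofReal
        (π ^ (-(d:ℝ)/2) * Real.exp (25/4 + 256*((d:ℝ)+3)^2) * (1/2:ℝ)^k)
        = ENNReal.ofReal (π ^ (-(d:ℝ)/2) * Real.exp (25/4 + 256*((d:ℝ)+3)^2)) *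
            (2⁻¹ : ℝ≥0∞)^k := by
      intro k
      rw [ENNReal.ofReal_mul hA0, ENNReal.ofReal_pow (by norm_num : (0:ℝ) ≤ 1/2)]
      congr 1
      rw [one_div, ENNReal.ofReal_inv_of_pos two_pos, ENNReal.ofReal_ofNat]
    rw [tsum_congr h1, ENNReal.tsum_mul_left, ENNReal.tsum_geometric,
      ENNReal.one_sub_inv_two, inv_inv]
  calc ENNReal.ofReal |ouSemigroup t f y|
      ≤ ENNReal.ofReal (π ^ (-(d:ℝ)/2) * (1 - Real.exp (-2*t)) ^ (-(d:ℝ)/2)) *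
          ∫⁻ u, ENNReal.ofReal
            ‖Real.exp (-‖u - Real.exp (-t) • y‖ ^ 2 / (1 - Real.exp (-2*t))) * f u‖ ∂volume :=
        step1
    _ = ENNReal.ofReal (π ^ (-(d:ℝ)/2) * (1 - Real.exp (-2*t)) ^ (-(d:ℝ)/2)) *
          ∫⁻ u, ENNReal.ofReal (π ^ ((d:ℝ)/2) *
            Real.exp (‖y‖^2 - Real.exp (-2*t) / (1 - Real.exp (-2*t)) * ‖u - Real.exp t • y‖^2)
              * |f u|) ∂(gaussianMeasure d) := by rw [step2]
    _ ≤ ENNReal.ofReal (π ^ (-(d:ℝ)/2) * (1 - Real.exp (-2*t)) ^ (-(d:ℝ)/2)) *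
          (ENNReal.ofReal (π ^ ((d:ℝ)/2) * Real.exp (‖x‖^2 + 9/4)) *
            ∑' k : ℕ, ENNReal.ofReal (Real.exp (4 - ((2:ℝ)^k)^2/16)) *
              ∫⁻ u in ball x (2^(k+1) * Real.sqrt t),
                ENNReal.ofReal |f u| ∂(gaussianMeasure d)) := mul_le_mul_right step3 _
    _ ≤ ENNReal.ofReal (π ^ (-(d:ℝ)/2) * (1 - Real.exp (-2*t)) ^ (-(d:ℝ)/2)) *
          (ENNReal.ofReal (π ^ ((d:ℝ)/2) * Real.exp (‖x‖^2 + 9/4)) *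
            ∑' k : ℕ, ENNReal.ofReal (Real.exp (4 - ((2:ℝ)^k)^2/16)) *
              (gaussianMeasure d (ball x (2^(k+1) * Real.sqrt t)) * gaussianMaximal f x)) := by
        gcongr with k
        exact lintegral_ball_le_maximal f x (by positivity)
    _ = ∑' k : ℕ, ENNReal.ofReal (π ^ (-(d:ℝ)/2) * (1 - Real.exp (-2*t)) ^ (-(d:ℝ)/2)) *
          (ENNReal.ofReal (π ^ ((d:ℝ)/2) * Real.exp (‖x‖^2 + 9/4)) *
            (ENNReal.ofReal (Real.exp (4 - ((2:ℝ)^k)^2/16)) *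
              (gaussianMeasure d (ball x (2^(k+1) * Real.sqrt t)) * gaussianMaximal f x))) := by
        rw [ENNReal.tsum_mul_left, ENNReal.tsum_mul_left]
    _ ≤ ∑' k : ℕ, ENNReal.ofReal
          (π ^ (-(d:ℝ)/2) * Real.exp (25/4 + 256*((d:ℝ)+3)^2) * (1/2:ℝ)^k) *
          (volume (ball (0 : EuclideanSpace ℝ (Fin d)) 1) * gaussianMaximal f x) :=
        ENNReal.tsum_le_tsum perk
    _ = (∑' k : ℕ, ENNReal.ofReal
          (π ^ (-(d:ℝ)/2) * Real.exp (25/4 + 256*((d:ℝ)+3)^2) * (1/2:ℝ)^k)) *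
          (volume (ball (0 : EuclideanSpace ℝ (Fin d)) 1) * gaussianMaximal f x) :=
        ENNReal.tsum_mul_right
    _ = _ := by rw [hsum]; ring


end Aux

/-- `𝒯*f ≤ C_d M_{γ_d} f` pointwise. -/
theorem truncNTMaximal_le_gaussianMaximal (d : ℕ) :
    ∃ C : ℝ≥0, ∀ f : EuclideanSpace ℝ (Fin d) → ℝ,
      Integrable f (gaussianMeasure d) →
        ∀ x, truncNTMaximal f x ≤ (C : ℝ≥0∞) * gaussianMaximal f x := by
  set Ctot : ℝ≥0∞ := ENNReal.ofReal (π ^ (-(d:ℝ)/2) * Real.exp (25/4 + 256*((d:ℝ)+3)^2)) * 2 *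
      volume (ball (0 : EuclideanSpace ℝ (Fin d)) 1) with hCt
  have hne : Ctot ≠ ⊤ := by
    rw [hCt]
    exact (ENNReal.mul_lt_top
      (ENNReal.mul_lt_top ENNReal.ofReal_lt_top (by norm_num)) measure_ball_lt_top).ne
  refine ⟨Ctot.toNNReal, ?_⟩
  intro f hf x
  rw [ENNReal.coe_toNNReal hne, truncNTMaximal]
  apply iSup₂_le
  rintro ⟨y, t⟩ hp
  obtain ⟨h1, h2, h3⟩ := hp
  exact core f hf x y t h1 h2 h3
end
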